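/- arXiv:1701.01590 — 2 statements merged into one kernel-verified Lean document; each statement's English description precedes it below -/
import Mathlib

section
/- Suppose h1 = 0 or h2 = 0 or h3 = 0. Then the Gaussian observation channel is manipulable: there exists a Markov kernel κ from ℝ to ℝ such that (μ_x.bind κ).bind G = μ_x.bind G for every x ∈ ℝ, yet the set {u ∈ ℝ : κ(u) ≠ δ_u} has positive Lebesgue measure. -/
open MeasureTheory ProbabilityTheory

/-- Bayes posterior weight of source symbol `+1` given direct observation `x`. -/
noncomputable def mixWeight (h3 x : ℝ) : ℝ :=
  Real.exp (-(x - h3) ^ 2 / 2) /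
    (Real.exp (-(x - h3) ^ 2 / 2) + Real.exp (-(x + h3) ^ 2 / 2))

/-- Conditional law of the relay's observation given direct observation `x`:
`μ_x = w(x) • N(h1,1) + (1 - w(x)) • N(-h1,1)`. -/
noncomputable def muX (h1 h3 x : ℝ) : Measure ℝ :=
  ENNReal.ofReal (mixWeight h3 x) • gaussianReal h1 1
    + ENNReal.ofReal (1 - mixWeight h3 x) • gaussianReal (-h1) 1

/-- Relay-to-destination Gaussian channel `G(v) = N(h2 ⬝ v, 1)`. -/
noncomputable def Gchan (h2 : ℝ) : ℝ → Measure ℝ := fun v => gaussianReal (h2 * v) 1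

/-! The attack ignores its input and draws a fresh sample from `μ_0`. If `h1 = 0` or `h3 = 0`,
then `μ_x` does not depend on `x`; if `h2 = 0`, the destination's output `N(0,1)` does not depend
on the relay's signal. Either way the destination cannot detect the attack. Since `μ_0` has no
atoms, it differs from every `δ_u`, so the attack is active on all of `ℝ`. -/

open scoped ENNReal

namespace MeasureTheory

variable {α : Type*} [MeasurableSpace α] {μ ν : Measure α}

instance Measure.nullSingletonClass_add [NullSingletonClass μ] [NullSingletonClass ν] :
    NullSingletonClass (μ + ν) :=
  ⟨fun x => by simp⟩

instance Measure.nullSingletonClass_smul [NullSingletonClass μ] (c : ℝ≥0∞) :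
    NullSingletonClass (c • μ) :=
  ⟨fun x => by simp⟩

theorem Measure.ne_dirac_of_nullSingletonClass (μ : Measure α) [NullSingletonClass μ] (a : α) :
    μ ≠ Measure.dirac a := by
  intro h
  simpa [h, Measure.dirac_apply_of_mem (Set.mem_singleton a)] using measure_singleton (μ := μ) a

end MeasureTheory

theorem mixWeight_nonneg (h3 x : ℝ) : 0 ≤ mixWeight h3 x := by
  unfold mixWeight
  positivity

theorem mixWeight_le_one (h3 x : ℝ) : mixWeight h3 x ≤ 1 := by
  unfold mixWeight
  rw [div_le_one (by positivity)]
  linarith [Real.exp_pos (-(x + h3) ^ 2 / 2)]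

theorem mixWeight_zero (x : ℝ) : mixWeight 0 x = 1 / 2 := by
  unfold mixWeight
  rw [sub_zero, add_zero, ← two_mul, div_eq_div_iff (by positivity) (by norm_num)]
  ring

theorem ofReal_mixWeight_add_ofReal_one_sub (h3 x : ℝ) :
    ENNReal.ofReal (mixWeight h3 x) + ENNReal.ofReal (1 - mixWeight h3 x) = 1 := by
  rw [← ENNReal.ofReal_add (mixWeight_nonneg h3 x) (by linarith [mixWeight_le_one h3 x])]
  simp

instance muX.instIsProbabilityMeasure (h1 h3 x : ℝ) : IsProbabilityMeasure (muX h1 h3 x) :=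
  ⟨by simp [muX, ofReal_mixWeight_add_ofReal_one_sub]⟩

instance muX.instNullSingletonClass (h1 h3 x : ℝ) : NullSingletonClass (muX h1 h3 x) := by
  have := nullSingletonClass_gaussianReal (μ := h1) one_ne_zero
  have := nullSingletonClass_gaussianReal (μ := -h1) one_ne_zero
  unfold muX
  infer_instance

theorem muX_of_h1_eq_zero (h3 x : ℝ) : muX 0 h3 x = gaussianReal 0 1 := by
  rw [muX, neg_zero, ← add_smul, ofReal_mixWeight_add_ofReal_one_sub, one_smul]

theorem muX_of_h3_eq_zero (h1 x : ℝ) : muX h1 0 x = muX h1 0 0 := by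
  rw [muX, muX, mixWeight_zero, mixWeight_zero]

theorem Gchan_zero : Gchan 0 = fun _ => gaussianReal 0 1 := by
  funext v
  simp [Gchan]

theorem muX_bind_Gchan_eq_of_zero_coeff {h1 h2 h3 : ℝ} (h0 : h1 = 0 ∨ h2 = 0 ∨ h3 = 0) (x : ℝ) :
    (muX h1 h3 x).bind (Gchan h2) = (muX h1 h3 0).bind (Gchan h2) := by
  rcases h0 with rfl | rfl | rfl
  · rw [muX_of_h1_eq_zero, muX_of_h1_eq_zero]
  · simp only [Gchan_zero, Measure.bind_const, measure_univ]
  · rw [muX_of_h3_eq_zero]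

/-- **Manipulability when some channel coefficient vanishes.**
If `h1 = 0` or `h2 = 0` or `h3 = 0`, then there is a Markov kernel `κ` (an attack)
that leaves every conditional output law unchanged although the set of `u` where
`κ u` differs from the Dirac measure `δ_u` has positive Lebesgue measure. -/
theorem manipulable_of_zero_coeff
    (h1 h2 h3 : ℝ) (h0 : h1 = 0 ∨ h2 = 0 ∨ h3 = 0) :
    ∃ κ : Kernel ℝ ℝ, IsMarkovKernel κ ∧
      (∀ x : ℝ,
        ((muX h1 h3 x).bind (κ ·)).bind (Gchan h2) = (muX h1 h3 x).bind (Gchan h2)) ∧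
      0 < volume {u : ℝ | κ u ≠ Measure.dirac u} := by
  refine ⟨Kernel.const ℝ (muX h1 h3 0), inferInstance, fun x => ?_, ?_⟩
  · simp only [Kernel.const_apply, Measure.bind_const, measure_univ, one_smul]
    exact (muX_bind_Gchan_eq_of_zero_coeff h0 x).symm
  · have hactive : {u : ℝ | muX h1 h3 0 ≠ Measure.dirac u} = Set.univ :=
      Set.eq_univ_of_forall (Measure.ne_dirac_of_nullSingletonClass _)
    simp only [Kernel.const_apply, hactive, Real.volume_univ, ENNReal.zero_lt_top]
end

section
/- Suppose h1 ≠ 0 and h3 ≠ 0. If a Markov kernel κ from ℝ to ℝ satisfies μ_x.bind κ = μ_x for every x ∈ ℝ (i.e., no i.i.d. attack can make the conditional distribution of the relay's forwarded symbol given the direct observation equal to the conditional distribution of the relay's received symbol given the direct observation, unless it is trivial), then κ(u) = δ_u for Lebesgue-almost every u ∈ ℝ. -/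
open MeasureTheory ProbabilityTheory

/-!
Evaluating the hypothesis at `x = 0` and `x = h3`, where the mixture weights differ, separates
the two components: `κ` fixes both `N(h1, 1)` and `N(-h1, 1)`. Up to a constant, the density of
one of these Gaussians with respect to the other is `ρ(y) = exp (t y)` with `t = ±2 h1`, and a
density `ρ ∈ L²(μ)` between two `κ`-invariant measures is `κ`-harmonic: for
`F(u) = ∫ ρ dκ_u`, invariance of `ρ μ` gives `∫ F ρ dμ = ∫ ρ² dμ`, while Jensen and invariance
of `μ` give `∫ F² dμ ≤ ∫ ρ² dμ`; hence `∫ (F - ρ)² dμ ≤ 0`. So for almost every `u` both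
`∫ exp (±2 h1 (v - u)) dκ_u(v)` equal `1`, i.e. `∫ cosh (2 h1 (v - u)) dκ_u(v) = 1`, and since
`cosh > 1` away from `0` this forces `κ_u = δ_u`.
-/

open Real Set
open scoped ENNReal NNReal

lemma ENNReal.two_mul_le_add_sq (x y : ℝ≥0∞) : 2 * x * y ≤ x ^ 2 + y ^ 2 := by
  rcases eq_or_ne x ∞ with rfl | hx
  · simp
  rcases eq_or_ne y ∞ with rfl | hy
  · simp
  lift x to ℝ≥0 using hx
  lift y to ℝ≥0 using hy
  exact_mod_cast _root_.two_mul_le_add_sq x y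

lemma ENNReal.eq_of_add_sq_le_two_mul {x y : ℝ≥0∞} (hx : x ≠ ∞) (hy : y ≠ ∞)
    (h : x ^ 2 + y ^ 2 ≤ 2 * x * y) : x = y := by
  lift x to ℝ≥0 using hx
  lift y to ℝ≥0 using hy
  have h' : (x : ℝ) ^ 2 + (y : ℝ) ^ 2 ≤ 2 * x * y := by exact_mod_cast h
  have : (x : ℝ) = y := by nlinarith [sq_nonneg ((x : ℝ) - y)]
  exact_mod_cast this

section Kernel

variable {α : Type*} [MeasurableSpace α]

lemma sq_lintegral_le_lintegral_sq {μ : Measure α} [IsProbabilityMeasure μ] {f : α → ℝ≥0∞}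
    (hf : AEMeasurable f μ) : (∫⁻ x, f x ∂μ) ^ 2 ≤ ∫⁻ x, f x ^ 2 ∂μ := by
  have h := ENNReal.lintegral_mul_le_Lp_mul_Lq μ HolderConjugate.two_two hf aemeasurable_const
    (g := 1)
  simp only [Pi.mul_apply, Pi.one_apply, mul_one, lintegral_const, measure_univ,
    ENNReal.rpow_two] at h
  calc (∫⁻ x, f x ∂μ) ^ 2 ≤ ((∫⁻ x, f x ^ 2 ∂μ) ^ (1 / 2 : ℝ)) ^ 2 := by gcongr; simpa using h
    _ = ∫⁻ x, f x ^ 2 ∂μ := by rw [← ENNReal.rpow_natCast, ← ENNReal.rpow_mul]; norm_num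

lemma lintegral_lintegral_kernel_of_comp_eq {μ : Measure α} {κ : Kernel α α} (hμ : κ ∘ₘ μ = μ)
    {f : α → ℝ≥0∞} (hf : Measurable f) :
    ∫⁻ x, ∫⁻ y, f y ∂κ x ∂μ = ∫⁻ x, f x ∂μ := by
  conv_rhs => rw [← hμ]
  rw [Measure.lintegral_bind κ.aemeasurable hf.aemeasurable]

theorem ae_lintegral_kernel_eq_of_comp_withDensity_eq {μ : Measure α} {κ : Kernel α α}
    [IsMarkovKernel κ] {ρ : α → ℝ≥0∞} (hρ : Measurable ρ) (hρ_sq : ∫⁻ x, ρ x ^ 2 ∂μ ≠ ∞)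
    (hμ : κ ∘ₘ μ = μ) (hρμ : κ ∘ₘ μ.withDensity ρ = μ.withDensity ρ) :
    ∀ᵐ x ∂μ, ∫⁻ y, ρ y ∂κ x = ρ x := by
  set F : α → ℝ≥0∞ := fun x ↦ ∫⁻ y, ρ y ∂κ x
  have hF : Measurable F := hρ.lintegral_kernel
  have hF_sq : ∫⁻ x, F x ^ 2 ∂μ ≤ ∫⁻ x, ρ x ^ 2 ∂μ :=
    calc ∫⁻ x, F x ^ 2 ∂μ ≤ ∫⁻ x, ∫⁻ y, ρ y ^ 2 ∂κ x ∂μ :=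
          lintegral_mono fun x ↦ sq_lintegral_le_lintegral_sq hρ.aemeasurable
      _ = ∫⁻ x, ρ x ^ 2 ∂μ := lintegral_lintegral_kernel_of_comp_eq hμ (hρ.pow_const 2)
  have hFρ : ∫⁻ x, 2 * F x * ρ x ∂μ = 2 * ∫⁻ x, ρ x ^ 2 ∂μ := by
    have h := lintegral_lintegral_kernel_of_comp_eq hρμ hρ
    rw [lintegral_withDensity_eq_lintegral_mul _ hρ hF,
      lintegral_withDensity_eq_lintegral_mul _ hρ hρ] at h
    simp_rw [mul_assoc, mul_comm (F _), sq]
    rw [lintegral_const_mul' _ _ (by simp)]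
    exact congrArg (2 * ·) h
  have h_eq : (fun x ↦ 2 * F x * ρ x) =ᵐ[μ] fun x ↦ F x ^ 2 + ρ x ^ 2 := by
    refine ae_eq_of_ae_le_of_lintegral_le (ae_of_all _ fun x ↦ ENNReal.two_mul_le_add_sq _ _)
      (by rw [hFρ]; exact ENNReal.mul_ne_top (by simp) hρ_sq)
      ((hF.pow_const 2).add (hρ.pow_const 2)).aemeasurable ?_
    rw [lintegral_add_left (hF.pow_const 2), hFρ, two_mul]
    gcongr
  have hF_fin : ∀ᵐ x ∂μ, F x ^ 2 < ∞ :=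
    ae_lt_top (hF.pow_const 2) (ne_top_of_le_ne_top hρ_sq hF_sq)
  have hρ_fin : ∀ᵐ x ∂μ, ρ x ^ 2 < ∞ := ae_lt_top (hρ.pow_const 2) hρ_sq
  filter_upwards [h_eq, hF_fin, hρ_fin] with x hx hFx hρx
  exact ENNReal.eq_of_add_sq_le_two_mul (by simpa using hFx.ne) (by simpa using hρx.ne) hx.ge

end Kernel

namespace MeasureTheory.Measure

variable {α : Type*} [MeasurableSpace α]

lemma eq_dirac_of_ae_eq {ν : Measure α} [IsProbabilityMeasure ν] {u : α}
    (h : ∀ᵐ y ∂ν, y = u) : ν = dirac u := by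
  have h_map : ν.map id = ν.map (fun _ ↦ u) := map_congr h
  rwa [map_id, map_const, measure_univ, one_smul] at h_map

noncomputable def mixture (w : ℝ) (μ ν : Measure α) : Measure α :=
  ENNReal.ofReal w • μ + ENNReal.ofReal (1 - w) • ν

lemma comp_mixture {β : Type*} [MeasurableSpace β] (κ : Kernel α β) (w : ℝ)
    (μ ν : Measure α) : κ ∘ₘ mixture w μ ν = mixture w (κ ∘ₘ μ) (κ ∘ₘ ν) := by
  simp [mixture]

lemma measureReal_mixture {w : ℝ} (hw : w ∈ Icc 0 1) (μ ν : Measure α) [IsFiniteMeasure μ]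
    [IsFiniteMeasure ν] (s : Set α) :
    (mixture w μ ν).real s = w * μ.real s + (1 - w) * ν.real s := by
  rw [mixture, measureReal_add_apply (by simp [ENNReal.mul_eq_top])
      (by simp [ENNReal.mul_eq_top]), measureReal_ennreal_smul_apply,
    measureReal_ennreal_smul_apply, ENNReal.toReal_ofReal hw.1,
    ENNReal.toReal_ofReal (sub_nonneg.mpr hw.2)]

lemma eq_of_mixture_eq_of_mixture_eq {μ₁ μ₂ ν₁ ν₂ : Measure α} [IsFiniteMeasure μ₁]
    [IsFiniteMeasure μ₂] [IsFiniteMeasure ν₁] [IsFiniteMeasure ν₂] {w w' : ℝ}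
    (hw : w ∈ Icc 0 1) (hw' : w' ∈ Icc 0 1) (hne : w ≠ w')
    (h : mixture w μ₁ μ₂ = mixture w ν₁ ν₂) (h' : mixture w' μ₁ μ₂ = mixture w' ν₁ ν₂) :
    μ₁ = ν₁ ∧ μ₂ = ν₂ := by
  have h_real : ∀ s, μ₁.real s = ν₁.real s ∧ μ₂.real s = ν₂.real s := fun s ↦ by
    have e := congrArg (·.real s) h
    have e' := congrArg (·.real s) h'
    simp only [measureReal_mixture hw, measureReal_mixture hw'] at e e'
    have h_diff : (w - w') * ((μ₁.real s - ν₁.real s) - (μ₂.real s - ν₂.real s)) = 0 := by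
      linear_combination e - e'
    have h_eq := (mul_eq_zero.mp h_diff).resolve_left (sub_ne_zero.mpr hne)
    exact ⟨by linear_combination e + (1 - w) * h_eq, by linear_combination e - w * h_eq⟩
  exact ⟨ext fun s _ ↦ (measureReal_eq_measureReal_iff).mp (h_real s).1,
    ext fun s _ ↦ (measureReal_eq_measureReal_iff).mp (h_real s).2⟩

end MeasureTheory.Measure

lemma mixWeight_eq_inv (h3 x : ℝ) : mixWeight h3 x = (1 + exp (-(2 * h3 * x)))⁻¹ := by
  have h_ratio : exp (-(x + h3) ^ 2 / 2) = exp (-(x - h3) ^ 2 / 2) * exp (-(2 * h3 * x)) := by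
    rw [← exp_add]; ring_nf
  rw [mixWeight, h_ratio, ← mul_one_add, div_mul_cancel_left₀ (exp_pos _).ne']

lemma mixWeight_mem_Icc (h3 x : ℝ) : mixWeight h3 x ∈ Icc 0 1 := by
  rw [mixWeight_eq_inv]
  exact ⟨by positivity, inv_le_one_of_one_le₀ (by linarith [exp_pos (-(2 * h3 * x))])⟩

lemma mixWeight_injective {h3 : ℝ} (hh3 : h3 ≠ 0) : Function.Injective (mixWeight h3) := by
  intro x y h
  simp only [mixWeight_eq_inv, inv_inj, add_right_inj, exp_eq_exp, neg_inj] at h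
  exact mul_left_cancel₀ (mul_ne_zero two_ne_zero hh3) h

lemma gaussianPDFReal_mul_exp (m : ℝ) (v : ℝ≥0) (t x : ℝ) :
    gaussianPDFReal m v x * exp (t * x) =
      exp (m * t + v * t ^ 2 / 2) * gaussianPDFReal (m + v * t) v x := by
  rcases eq_or_ne v 0 with rfl | hv
  · simp [gaussianPDFReal_zero_var]
  simp only [gaussianPDFReal]
  rw [mul_assoc, ← exp_add, mul_left_comm, ← exp_add]
  congr 2
  have : (v : ℝ) ≠ 0 := by exact_mod_cast hv
  field_simp
  ring

lemma gaussianReal_withDensity_exp (m : ℝ) {v : ℝ≥0} (hv : v ≠ 0) (t : ℝ) :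
    (gaussianReal m v).withDensity (fun x ↦ ENNReal.ofReal (exp (t * x))) =
      ENNReal.ofReal (exp (m * t + v * t ^ 2 / 2)) • gaussianReal (m + v * t) v := by
  rw [gaussianReal_of_var_ne_zero _ hv, gaussianReal_of_var_ne_zero _ hv,
    ← withDensity_mul _ (measurable_gaussianPDF _ _) (by fun_prop),
    ← withDensity_smul _ (measurable_gaussianPDF _ _)]
  congr 1
  ext x
  simp only [Pi.mul_apply, Pi.smul_apply, smul_eq_mul, gaussianPDF]
  rw [← ENNReal.ofReal_mul (gaussianPDFReal_nonneg _ _ _), gaussianPDFReal_mul_exp,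
    ENNReal.ofReal_mul (exp_nonneg _)]

lemma lintegral_exp_gaussianReal (m : ℝ) {v : ℝ≥0} (hv : v ≠ 0) (t : ℝ) :
    ∫⁻ x, ENNReal.ofReal (exp (t * x)) ∂gaussianReal m v =
      ENNReal.ofReal (exp (m * t + v * t ^ 2 / 2)) := by
  rw [← setLIntegral_univ, ← withDensity_apply _ MeasurableSet.univ,
    gaussianReal_withDensity_exp m hv]
  simp

lemma ae_lintegral_exp_kernel_eq {κ : Kernel ℝ ℝ} [IsMarkovKernel κ] {m t : ℝ} {v : ℝ≥0}
    (hv : v ≠ 0) (h₀ : κ ∘ₘ gaussianReal m v = gaussianReal m v)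
    (h₁ : κ ∘ₘ gaussianReal (m + v * t) v = gaussianReal (m + v * t) v) :
    ∀ᵐ x, ∫⁻ y, ENNReal.ofReal (exp (t * y)) ∂κ x = ENNReal.ofReal (exp (t * x)) := by
  have h_sq : ∀ x : ℝ, ENNReal.ofReal (exp (t * x)) ^ 2 = ENNReal.ofReal (exp (2 * t * x)) := by
    intro x
    rw [← ENNReal.ofReal_pow (exp_nonneg _), ← exp_nat_mul]
    ring_nf
  refine (gaussianReal_absolutelyContinuous' m hv).ae_le
    (ae_lintegral_kernel_eq_of_comp_withDensity_eq (by fun_prop) ?_ h₀ ?_)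
  · simp_rw [h_sq, lintegral_exp_gaussianReal m hv]
    exact ENNReal.ofReal_ne_top
  · rw [gaussianReal_withDensity_exp m hv, Measure.comp_smul, h₁]

lemma lintegral_exp_sub_eq_one {ν : Measure ℝ} {t u : ℝ}
    (h : ∫⁻ y, ENNReal.ofReal (exp (t * y)) ∂ν = ENNReal.ofReal (exp (t * u))) :
    ∫⁻ y, ENNReal.ofReal (exp (t * (y - u))) ∂ν = 1 := by
  have h_split : ∀ y, ENNReal.ofReal (exp (t * (y - u))) =
      ENNReal.ofReal (exp (t * y)) * ENNReal.ofReal (exp (-(t * u))) := fun y ↦ by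
    rw [← ENNReal.ofReal_mul (exp_nonneg _), ← exp_add, mul_sub, sub_eq_add_neg]
  simp_rw [h_split]
  rw [lintegral_mul_const _ (by fun_prop), h, ← ENNReal.ofReal_mul (exp_nonneg _), ← exp_add,
    add_neg_cancel, exp_zero, ENNReal.ofReal_one]

lemma eq_dirac_of_lintegral_exp {ν : Measure ℝ} [IsProbabilityMeasure ν] {s u : ℝ} (hs : s ≠ 0)
    (hpos : ∫⁻ y, ENNReal.ofReal (exp (s * y)) ∂ν = ENNReal.ofReal (exp (s * u)))
    (hneg : ∫⁻ y, ENNReal.ofReal (exp (-s * y)) ∂ν = ENNReal.ofReal (exp (-s * u))) :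
    ν = Measure.dirac u := by
  have h_cosh : ∀ y, ENNReal.ofReal (exp (s * (y - u))) + ENNReal.ofReal (exp (-s * (y - u))) =
      ENNReal.ofReal (2 * cosh (s * (y - u))) := fun y ↦ by
    rw [← ENNReal.ofReal_add (exp_nonneg _) (exp_nonneg _), cosh_eq, neg_mul]
    ring_nf
  have h_int : ∫⁻ y, ENNReal.ofReal (2 * cosh (s * (y - u))) ∂ν = ∫⁻ _, 2 ∂ν := by
    simp_rw [← h_cosh]
    rw [lintegral_add_left (by fun_prop), lintegral_exp_sub_eq_one hpos,
      lintegral_exp_sub_eq_one hneg]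
    simp [one_add_one_eq_two]
  have h_ge : ∀ y, (2 : ℝ≥0∞) ≤ ENNReal.ofReal (2 * cosh (s * (y - u))) := fun y ↦ by
    rw [← ENNReal.ofReal_ofNat]
    exact ENNReal.ofReal_le_ofReal (by linarith [one_le_cosh (s * (y - u))])
  have h_ae := ae_eq_of_ae_le_of_lintegral_le (ae_of_all ν h_ge) (by simp) (by fun_prop) h_int.le
  refine Measure.eq_dirac_of_ae_eq ?_
  filter_upwards [h_ae] with y hy
  have h_one : cosh (s * (y - u)) = 1 := by
    rw [← ENNReal.ofReal_ofNat, ENNReal.ofReal_eq_ofReal_iff (by norm_num)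
      (by positivity)] at hy
    linarith
  have h_zero : s * (y - u) = 0 := by
    by_contra h
    exact (one_lt_cosh.mpr h).ne' h_one
  linarith [(mul_eq_zero.mp h_zero).resolve_left hs]

/-- **No nontrivial i.i.d. attack preserves all the conditional laws `μ_x` (Lemma 1).**
If `h1 ≠ 0` and `h3 ≠ 0` and a Markov kernel `κ` satisfies `μ_x.bind κ = μ_x` for
every `x`, then `κ u = δ_u` for Lebesgue-almost every `u`. -/
theorem no_nontrivial_iid_attack (h1 h3 : ℝ) (hh1 : h1 ≠ 0) (hh3 : h3 ≠ 0)
    (κ : Kernel ℝ ℝ) [IsMarkovKernel κ]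
    (hκ : ∀ x : ℝ, (muX h1 h3 x).bind (κ ·) = muX h1 h3 x) :
    ∀ᵐ u ∂(volume : Measure ℝ), κ u = Measure.dirac u := by
  have h_mix : ∀ x, Measure.mixture (mixWeight h3 x) (κ ∘ₘ gaussianReal h1 1)
      (κ ∘ₘ gaussianReal (-h1) 1) =
      Measure.mixture (mixWeight h3 x) (gaussianReal h1 1) (gaussianReal (-h1) 1) := fun x ↦ by
    rw [← Measure.comp_mixture]
    exact hκ x
  obtain ⟨hP, hQ⟩ := Measure.eq_of_mixture_eq_of_mixture_eq (mixWeight_mem_Icc h3 0)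
    (mixWeight_mem_Icc h3 h3) ((mixWeight_injective hh3).ne hh3.symm) (h_mix 0) (h_mix h3)
  have h_up := ae_lintegral_exp_kernel_eq (m := -h1) (t := 2 * h1) one_ne_zero hQ
    (by convert hP using 3 <;> push_cast <;> ring)
  have h_down := ae_lintegral_exp_kernel_eq (m := h1) (t := -(2 * h1)) one_ne_zero hP
    (by convert hQ using 3 <;> push_cast <;> ring)
  filter_upwards [h_up, h_down] with u hu hd
  exact eq_dirac_of_lintegral_exp (mul_ne_zero two_ne_zero hh1) hu hd
end
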